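/- Let γ ≥ 3 and n ≥ 2(γ+1) be integers. The energy of the circulant graph C^{1,γ}_n equals 4·∑_{m∈{1,γ}} ( ∑_{l=0}^{⌈γ/2⌉−1} D_{⌊(2l+1)n/(2(γ+1))⌋}(2πm/n) − ∑_{l=0}^{⌈γ/2⌉−2} D_{⌊(2l+1)n/(2(γ−1))⌋}(2πm/n) ), where D_m(x) = sin((m+1/2)x)/sin(x/2) is the Dirichlet kernel, ⌊·⌋ is the floor function and ⌈·⌉ is the ceiling function. -/

import Mathlib

open Real Finset Matrix

/-- The circulant graph `C^{1,γ}_n` on vertex set `ℤ/nℤ`: distinct vertices `u, v`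
are adjacent iff `u - v ∈ {1, -1, γ, -γ}` (mod `n`). -/
def circGraph (n γ : ℕ) : SimpleGraph (ZMod n) :=
  SimpleGraph.circulantGraph ({1, (γ : ZMod n)} : Set (ZMod n))

noncomputable instance (n γ : ℕ) : DecidableRel (circGraph n γ).Adj :=
  Classical.decRel _

/-- The adjacency matrix of a finite simple graph is Hermitian as a real matrix. -/
theorem adjMatrix_isHermitian {V : Type*} [Fintype V] [DecidableEq V]
    (G : SimpleGraph V) [DecidableRel G.Adj] : (G.adjMatrix ℝ).IsHermitian := by
  rw [Matrix.IsHermitian, Matrix.conjTranspose_eq_transpose_of_trivial]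
  exact G.isSymm_adjMatrix

/-- The energy of a finite simple graph: the sum of the absolute values of the
eigenvalues (with multiplicity) of its adjacency matrix. -/
noncomputable def graphEnergy {V : Type*} [Fintype V] [DecidableEq V]
    (G : SimpleGraph V) [DecidableRel G.Adj] : ℝ :=
  ∑ i, |(adjMatrix_isHermitian G).eigenvalues i|

/-- The Dirichlet kernel `D_m(x) = sin((m + 1/2)x) / sin(x/2)`. -/
noncomputable def DKern (m : ℕ) (x : ℝ) : ℝ :=
  Real.sin ((m + 1 / 2) * x) / Real.sin (x / 2)

/-!
The adjacency matrix of `C^{1,γ}_n` is circulant, so it is diagonalised by the characters of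
`ℤ/nℤ` and its eigenvalues are `λ_j = 2 cos (2πj/n) + 2 cos (2πγj/n)
= 4 cos (π(γ+1)j/n) cos (π(γ-1)j/n)`, `j < n`. For `j ≤ n/2` the factor `cos (πcj/n)` has sign
`(-1)^M`, `M` the integer nearest to `cj/n`, and `M` jumps exactly where `j` leaves one of the
windows `[0, ⌊(2l+1)n/(2c)⌋]`. Counting windows of both kinds therefore gives
`|λ_j| = (2 w_j - 1) λ_j`, with `w_j ∈ {0, 1}` the number of `(γ+1)`-windows minus the number of
`(γ-1)`-windows containing `min (j, n - j)`. Since `D_M(2πm/n) = ∑_{|j| ≤ M} cos (2πmj/n)` and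
`∑_j λ_j = 0`, summing over `j` gives the formula.
-/

open Polynomial

namespace Matrix

variable {R K : Type*} [CommRing R] [Fintype R] [DecidableEq R] [Field K]

theorem charpoly_circulant {ψ : AddChar R K} (hψ : ψ.IsPrimitive)
    (hR : (Fintype.card R : K) ≠ 0) (c : R → K) :
    (circulant c).charpoly = ∏ k, (X - C (∑ j, c j * ψ (j * k))) := by
  set V : Matrix R R K := of fun i k => ψ (-(i * k))
  set W : Matrix R R K := of fun i k => (Fintype.card R : K)⁻¹ * ψ (i * k)
  have hVW : V * W = 1 := by
    ext i k
    have hsum : ∑ v, ψ (-(i * v)) * ψ (v * k) = ∑ v, ψ (v * (k - i)) :=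
      sum_congr rfl fun v _ => by rw [← AddChar.map_add_eq_mul]; ring_nf
    simp only [V, W, mul_apply, of_apply, mul_left_comm _ (Fintype.card R : K)⁻¹,
      ← Finset.mul_sum, hsum, AddChar.sum_mulShift _ hψ, sub_eq_zero, one_apply, eq_comm (a := k)]
    split_ifs <;> simp [hR]
  have hdiag : circulant c * V = V * diagonal fun k => ∑ j, c j * ψ (j * k) := by
    ext i k
    rw [mul_diagonal]
    simp only [V, mul_apply, of_apply, circulant_apply, Finset.mul_sum]
    refine Fintype.sum_equiv (Equiv.subLeft i) _ _ fun v => ?_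
    simp only [Equiv.subLeft_apply]
    rw [mul_left_comm, ← AddChar.map_add_eq_mul]
    ring_nf
  have hconj : circulant c = V * (diagonal (fun k => ∑ j, c j * ψ (j * k)) * W) := by
    rw [← Matrix.mul_assoc, ← hdiag, Matrix.mul_assoc, hVW, Matrix.mul_one]
  rw [hconj, charpoly_mul_comm, Matrix.mul_assoc, mul_eq_one_comm.mp hVW, Matrix.mul_one,
    charpoly_diagonal]

end Matrix

theorem Polynomial.roots_finset_prod_X_sub_C {κ R : Type*} [CommRing R] [IsDomain R]
    (s : Finset κ) (f : κ → R) : (∏ k ∈ s, (X - C (f k))).roots = s.val.map f := by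
  rw [prod_eq_multiset_prod, ← roots_multiset_prod_X_sub_C (s.val.map f), Multiset.map_map]
  rfl

theorem Matrix.IsHermitian.sum_abs_eigenvalues_eq {ι κ : Type*} [Fintype ι] [DecidableEq ι]
    [Fintype κ] {S : Matrix ι ι ℝ} (hS : S.IsHermitian) (μ : κ → ℂ)
    (h : (S.map Complex.ofRealHom).charpoly = ∏ k, (X - C (μ k))) :
    ∑ i, |hS.eigenvalues i| = ∑ k, ‖μ k‖ := by
  rw [charpoly_map, hS.charpoly_eq, Polynomial.map_prod] at h
  simp only [Polynomial.map_sub, map_X, map_C, RCLike.ofReal_real_eq_id, id] at h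
  have hroots := congrArg roots h
  rw [roots_finset_prod_X_sub_C, roots_finset_prod_X_sub_C] at hroots
  calc ∑ i, |hS.eigenvalues i| = ∑ i, ‖Complex.ofRealHom (hS.eigenvalues i)‖ := by simp
    _ = ∑ k, ‖μ k‖ := by
      simpa only [sum_eq_multiset_sum, Multiset.map_map, Function.comp_def] using
        congrArg (fun s => (s.map (‖·‖)).sum) hroots

theorem ZMod.sum_eq_sum_range {M : Type*} [AddCommMonoid M] (n : ℕ) [NeZero n]
    (f : ZMod n → M) : ∑ k, f k = ∑ j ∈ range n, f j :=
  sum_nbij' ZMod.val Nat.cast (fun k _ => mem_range.2 k.val_lt) (fun _ _ => mem_univ _)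
    (fun k _ => ZMod.natCast_zmod_val k) (fun _ hj => ZMod.val_natCast_of_lt (mem_range.1 hj))
    (fun k _ => by rw [ZMod.natCast_zmod_val])

theorem ZMod.stdAddChar_add_stdAddChar_neg {n : ℕ} [NeZero n] (a : ℕ) :
    stdAddChar (a : ZMod n) + stdAddChar (-(a : ZMod n)) = ((2 * cos (2 * π * a / n) : ℝ) : ℂ) := by
  rw [← Int.cast_natCast, ← Int.cast_neg, stdAddChar_coe, stdAddChar_coe]
  push_cast
  rw [Complex.two_cos]
  ring_nf

namespace SimpleGraph

theorem adjMatrix_eq_circulant {G α : Type*} [AddGroup G] [Fintype G] [DecidableEq G]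
    [Zero α] [One α] {Γ : SimpleGraph G} [DecidableRel Γ.Adj]
    (hΓ : ∀ u v, Γ.Adj u v ↔ Γ.Adj (u - v) 0) :
    Γ.adjMatrix α = circulant fun d => if Γ.Adj d 0 then 1 else 0 := by
  ext u v
  exact if_congr (hΓ u v) rfl rfl

theorem graphEnergy_eq_sum_norm_sum_stdAddChar {n : ℕ} [NeZero n] {Γ : SimpleGraph (ZMod n)}
    [DecidableRel Γ.Adj] (hΓ : ∀ u v, Γ.Adj u v ↔ Γ.Adj (u - v) 0) :
    graphEnergy Γ = ∑ k, ‖∑ d with Γ.Adj d 0, ZMod.stdAddChar (d * k)‖ := by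
  refine (adjMatrix_isHermitian Γ).sum_abs_eigenvalues_eq _ ?_
  rw [adjMatrix_eq_circulant hΓ, map_circulant,
    charpoly_circulant (ZMod.isPrimitive_stdAddChar n) (by simp [NeZero.ne n])]
  simp only [sum_filter, apply_ite, map_one, map_zero, ite_mul, one_mul, zero_mul]

end SimpleGraph

theorem ZMod.natCast_ne_zero_of_pos_of_lt {n a : ℕ} (h0 : 0 < a) (h : a < n) :
    (a : ZMod n) ≠ 0 := by
  rw [Ne, ZMod.natCast_eq_zero_iff]
  exact Nat.not_dvd_of_pos_of_lt h0 h

/-- The natural number nearest to `a / b`, ties rounded down. -/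
def roundHalfDown (a b : ℕ) : ℕ := (2 * a + b - 1) / (2 * b)

theorem lt_roundHalfDown_iff {a b l : ℕ} (hb : 0 < b) :
    l < roundHalfDown a b ↔ (2 * l + 1) * b < 2 * a := by
  rw [roundHalfDown, Nat.lt_iff_add_one_le, Nat.le_div_iff_mul_le (by omega),
    show (l + 1) * (2 * b) = 2 * b * l + 2 * b by ring,
    show (2 * l + 1) * b = 2 * b * l + b by ring]
  omega

theorem roundHalfDown_le {a b L : ℕ} (hb : 0 < b) (h : 2 * a ≤ (2 * L + 1) * b) :
    roundHalfDown a b ≤ L :=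
  not_lt.1 fun hL => ((lt_roundHalfDown_iff hb).1 hL).not_ge h

theorem roundHalfDown_mono {a a' : ℕ} (b : ℕ) (h : a ≤ a') :
    roundHalfDown a b ≤ roundHalfDown a' b :=
  Nat.div_le_div_right (by omega)

theorem roundHalfDown_add_self {a b : ℕ} (hb : 0 < b) :
    roundHalfDown (a + b) b = roundHalfDown a b + 1 := by
  rw [roundHalfDown, roundHalfDown, show 2 * (a + b) + b - 1 = 2 * a + b - 1 + 2 * b by omega,
    Nat.add_div_right _ (by omega)]

theorem Real.neg_one_pow_mul_cos_nonneg {x : ℝ} {M : ℕ} (h₁ : (M - 1 / 2) * π ≤ x)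
    (h₂ : x ≤ (M + 1 / 2) * π) : 0 ≤ (-1) ^ M * cos x := by
  rw [← cos_sub_nat_mul_pi]
  exact cos_nonneg_of_mem_Icc ⟨by linarith, by linarith⟩

theorem neg_one_pow_roundHalfDown_mul_cos_nonneg {a b : ℕ} (hb : 0 < b) :
    0 ≤ (-1) ^ roundHalfDown a b * cos (π * a / b) := by
  set M := roundHalfDown a b
  have hbR : (0 : ℝ) < b := by exact_mod_cast hb
  have hup : 2 * a ≤ (2 * M + 1) * b :=
    not_lt.1 fun h => lt_irrefl M ((lt_roundHalfDown_iff hb).2 h)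
  have hlow : (2 * M - 1 : ℝ) * b ≤ 2 * a := by
    rcases Nat.eq_zero_or_pos M with h0 | hpos
    · rw [h0]; push_cast; nlinarith
    · have := (lt_roundHalfDown_iff hb).1 (Nat.sub_lt hpos one_pos)
      have hR : ((2 * (M - 1) + 1) * b : ℕ) < (2 * a : ℝ) := by exact_mod_cast this
      push_cast [Nat.cast_sub hpos] at hR
      linarith
  have hupR : (2 * a : ℝ) ≤ (2 * M + 1) * b := by exact_mod_cast hup
  apply Real.neg_one_pow_mul_cos_nonneg
  · rw [le_div_iff₀ hbR]; nlinarith [pi_pos]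
  · rw [div_le_iff₀ hbR]; nlinarith [pi_pos]

theorem DKern_eq_one_add_two_mul_sum_cos {x : ℝ} (hx : sin (x / 2) ≠ 0) (M : ℕ) :
    DKern M x = 1 + 2 * ∑ k ∈ range M, cos ((k + 1) * x) := by
  induction M with
  | zero =>
    rw [DKern, Nat.cast_zero, zero_add, show (1 / 2 : ℝ) * x = x / 2 by ring, div_self hx]
    simp
  | succ M ih =>
    have hstep : sin ((M + 1 + 1 / 2) * x) =
        sin ((M + 1 / 2) * x) + 2 * sin (x / 2) * cos ((M + 1) * x) := by
      rw [two_mul_sin_mul_cos, show x / 2 - (M + 1) * x = -((M + 1 / 2) * x) by ring, sin_neg,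
        show x / 2 + (M + 1) * x = (M + 1 + 1 / 2) * x by ring]
      ring
    rw [sum_range_succ, mul_add, ← add_assoc, ← ih, DKern, DKern, Nat.cast_succ, hstep]
    field_simp

theorem sum_cos_window {n M : ℕ} (m : ℕ) (hM : 2 * M < n) :
    ∑ j ∈ range n with min j (n - j) ≤ M, cos (j * (2 * π * m / n)) =
      1 + 2 * ∑ k ∈ range M, cos ((k + 1) * (2 * π * m / n)) := by
  have hsplit : ({j ∈ range n | min j (n - j) ≤ M} : Finset ℕ) = range (M + 1) ∪ Ico (n - M) n := by
    ext j
    simp only [mem_filter, mem_range, mem_union, mem_Ico]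
    omega
  have hdisj : Disjoint (range (M + 1)) (Ico (n - M) n) := by
    rw [disjoint_left]
    intro j hj hj'
    simp only [mem_range, mem_Ico] at hj hj'
    omega
  have hhigh : ∑ j ∈ Ico (n - M) n, cos (j * (2 * π * m / n)) =
      ∑ k ∈ range M, cos ((k + 1) * (2 * π * m / n)) := by
    rw [sum_Ico_eq_sum_range, show n - (n - M) = M by omega, ← sum_range_reflect]
    refine sum_congr rfl fun k hk => ?_
    have hkM := mem_range.1 hk
    rw [show n - M + (M - 1 - k) = n - (k + 1) by omega, Nat.cast_sub (by omega)]
    have hn : (n : ℝ) ≠ 0 := by norm_cast; omega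
    rw [show ((n : ℕ) - ((k + 1 : ℕ) : ℝ)) * (2 * π * m / n) =
        m * (2 * π) - (k + 1) * (2 * π * m / n) by field_simp; push_cast; ring,
      cos_nat_mul_two_pi_sub]
  rw [hsplit, sum_union hdisj, sum_range_succ', hhigh]
  simp only [Nat.cast_add, Nat.cast_one, Nat.cast_zero, zero_mul, cos_zero]
  ring

theorem DKern_eq_sum_cos_window {n m M : ℕ} (hm : 0 < m) (hmn : m < n) (hM : 2 * M < n) :
    DKern M (2 * π * m / n) =
      ∑ j ∈ range n with min j (n - j) ≤ M, cos (j * (2 * π * m / n)) := by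
  have hnR : (0 : ℝ) < n := by norm_cast; omega
  have hsin : sin (2 * π * m / n / 2) ≠ 0 := by
    refine (sin_pos_of_pos_of_lt_pi (by positivity) ?_).ne'
    rw [div_div, div_lt_iff₀ (by positivity)]
    have : (m : ℝ) < n := by exact_mod_cast hmn
    nlinarith [pi_pos]
  rw [sum_cos_window m hM, DKern_eq_one_add_two_mul_sum_cos hsin]

theorem two_mul_div_lt {n c l : ℕ} (hn : 0 < n) (hl : 2 * l + 1 < c) :
    2 * ((2 * l + 1) * n / (2 * c)) < n := by
  have hq := Nat.div_mul_le_self ((2 * l + 1) * n) (2 * c)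
  by_contra! h
  nlinarith

noncomputable def circEigenvalue (n γ j : ℕ) : ℝ :=
  2 * cos (2 * π * j / n) + 2 * cos (2 * π * γ * j / n)

theorem circGraph_adj_iff_sub_adj_zero (n γ : ℕ) (u v : ZMod n) :
    (circGraph n γ).Adj u v ↔ (circGraph n γ).Adj (u - v) 0 := by
  rw [circGraph, ← sub_self v]
  simp only [sub_eq_add_neg, SimpleGraph.circulantGraph_adj_translate]

theorem circGraph_filter_adj_zero {n γ : ℕ} [NeZero n] (hγ : 2 ≤ γ) (hn : 2 * (γ + 1) ≤ n) :
    ({d | (circGraph n γ).Adj d 0} : Finset (ZMod n)) = {1, -1, (γ : ZMod n), -(γ : ZMod n)} := by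
  have h1 : (1 : ZMod n) ≠ 0 := by
    exact_mod_cast ZMod.natCast_ne_zero_of_pos_of_lt one_pos (by omega : 1 < n)
  have hγ0 : (γ : ZMod n) ≠ 0 := ZMod.natCast_ne_zero_of_pos_of_lt (by omega) (by omega)
  ext d
  simp only [circGraph, mem_filter, mem_univ, true_and, SimpleGraph.circulantGraph_adj,
    sub_zero, zero_sub, Set.mem_insert_iff, Set.mem_singleton_iff, mem_insert, mem_singleton,
    neg_eq_iff_eq_neg]
  constructor
  · rintro ⟨-, h⟩
    tauto
  · rintro (rfl | rfl | rfl | rfl) <;> simp [h1, hγ0]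

theorem sum_circGraph_adj_zero_stdAddChar {n γ : ℕ} [NeZero n] (hγ : 2 ≤ γ)
    (hn : 2 * (γ + 1) ≤ n) (j : ℕ) :
    ∑ d with (circGraph n γ).Adj d 0, ZMod.stdAddChar (d * (j : ZMod n)) =
      (circEigenvalue n γ j : ℂ) := by
  have hne : ∀ a : ℕ, 0 < a → a < n → (a : ZMod n) ≠ 0 :=
    fun _ h0 h => ZMod.natCast_ne_zero_of_pos_of_lt h0 h
  have h2 : (2 : ZMod n) ≠ 0 := by exact_mod_cast hne 2 (by omega) (by omega)
  have hsub : (γ : ZMod n) - 1 ≠ 0 := by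
    have := hne (γ - 1) (by omega) (by omega)
    rwa [Nat.cast_sub (by omega), Nat.cast_one] at this
  have hadd : (γ : ZMod n) + 1 ≠ 0 := by exact_mod_cast hne (γ + 1) (by omega) (by omega)
  have h2γ : 2 * (γ : ZMod n) ≠ 0 := by exact_mod_cast hne (2 * γ) (by omega) (by omega)
  rw [circGraph_filter_adj_zero hγ hn, sum_insert, sum_insert, sum_insert, sum_singleton]
  · have hγj : (γ : ZMod n) * j = ((γ * j : ℕ) : ZMod n) := by push_cast; ring
    rw [one_mul, neg_one_mul, neg_mul, hγj, ← add_assoc, ZMod.stdAddChar_add_stdAddChar_neg,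
      ZMod.stdAddChar_add_stdAddChar_neg, circEigenvalue]
    push_cast
    ring_nf
  · simpa [eq_neg_iff_add_eq_zero, two_mul] using h2γ
  · simp only [mem_insert, mem_singleton, not_or]
    exact ⟨fun h => hadd (by linear_combination -h), fun h => hsub (by linear_combination h)⟩
  · simp only [mem_insert, mem_singleton, not_or]
    exact ⟨fun h => h2 (by linear_combination h), fun h => hsub (by linear_combination -h),
      fun h => hadd (by linear_combination h)⟩

theorem graphEnergy_circGraph {n γ : ℕ} [NeZero n] (hγ : 2 ≤ γ) (hn : 2 * (γ + 1) ≤ n) :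
    graphEnergy (circGraph n γ) = ∑ j ∈ range n, |circEigenvalue n γ j| := by
  rw [SimpleGraph.graphEnergy_eq_sum_norm_sum_stdAddChar (circGraph_adj_iff_sub_adj_zero n γ),
    ZMod.sum_eq_sum_range]
  refine sum_congr rfl fun j _ => ?_
  rw [sum_circGraph_adj_zero_stdAddChar hγ hn, Complex.norm_real, Real.norm_eq_abs]

theorem sum_circEigenvalue_eq_zero {n γ : ℕ} [NeZero n] (hγ : 2 ≤ γ) (hn : 2 * (γ + 1) ≤ n) :
    ∑ j ∈ range n, circEigenvalue n γ j = 0 := by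
  apply Complex.ofReal_injective
  push_cast
  calc ∑ j ∈ range n, (circEigenvalue n γ j : ℂ)
      = ∑ j ∈ range n, ∑ d with (circGraph n γ).Adj d 0, ZMod.stdAddChar (d * (j : ZMod n)) :=
        sum_congr rfl fun j _ => (sum_circGraph_adj_zero_stdAddChar hγ hn j).symm
    _ = ∑ k, ∑ d with (circGraph n γ).Adj d 0, ZMod.stdAddChar (d * k) :=
        (ZMod.sum_eq_sum_range n fun k => ∑ d with (circGraph n γ).Adj d 0,
          ZMod.stdAddChar (d * k)).symm
    _ = ∑ d with (circGraph n γ).Adj d 0, ∑ k, ZMod.stdAddChar (k * d) := by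
        rw [sum_comm]
        simp_rw [mul_comm]
    _ = 0 := sum_eq_zero fun d hd => by
        rw [AddChar.sum_mulShift d (ZMod.isPrimitive_stdAddChar n), if_neg (mem_filter.1 hd).2.ne,
          Nat.cast_zero]

theorem circEigenvalue_sub {n γ j : ℕ} (hn : 0 < n) (hj : j ≤ n) :
    circEigenvalue n γ (n - j) = circEigenvalue n γ j := by
  have hnR : (n : ℝ) ≠ 0 := by norm_cast; omega
  have h₁ : 2 * π * ((n - j : ℕ) : ℝ) / n = (1 : ℕ) * (2 * π) - 2 * π * j / n := by
    rw [Nat.cast_sub hj]; field_simp; ring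
  have h₂ : 2 * π * γ * ((n - j : ℕ) : ℝ) / n = γ * (2 * π) - 2 * π * γ * j / n := by
    rw [Nat.cast_sub hj]; field_simp
  rw [circEigenvalue, circEigenvalue, h₁, h₂, cos_nat_mul_two_pi_sub, cos_nat_mul_two_pi_sub]

theorem circEigenvalue_eq_mul_cos {n γ k : ℕ} (hγ : 1 ≤ γ) :
    circEigenvalue n γ k =
      4 * (cos (π * ((γ + 1) * k : ℕ) / n) * cos (π * ((γ - 1) * k : ℕ) / n)) := by
  rw [circEigenvalue, ← mul_add, cos_add_cos, ← cos_neg ((_ - _) / 2)]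
  push_cast [Nat.cast_sub hγ]
  ring_nf

def windowCount (n c L k : ℕ) : ℕ := #{l ∈ range L | k ≤ (2 * l + 1) * n / (2 * c)}

theorem windowCount_eq {n c L k : ℕ} (hn : 0 < n) (hc : 0 < c) :
    windowCount n c L k = L - roundHalfDown (c * k) n := by
  have hmem : ∀ l, k ≤ (2 * l + 1) * n / (2 * c) ↔ roundHalfDown (c * k) n ≤ l := fun l => by
    rw [Nat.le_div_iff_mul_le (by omega), ← not_lt, ← not_lt, lt_roundHalfDown_iff hn,
      show k * (2 * c) = 2 * (c * k) by ring]
  rw [windowCount, filter_congr fun l _ => hmem l, ← Nat.card_Ico]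
  congr 1
  ext l
  simp only [mem_filter, mem_range, mem_Ico]
  tauto

theorem sum_DKern_eq_sum_windowCount_mul_cos {n c L m : ℕ} (hm : 0 < m) (hmn : m < n)
    (hL : 2 * L ≤ c) :
    ∑ l ∈ range L, DKern ((2 * l + 1) * n / (2 * c)) (2 * π * m / n) =
      ∑ j ∈ range n, (windowCount n c L (min j (n - j)) : ℝ) * cos (j * (2 * π * m / n)) := by
  rw [sum_congr rfl fun l hl => DKern_eq_sum_cos_window hm hmn
    (two_mul_div_lt (by omega) (by have := mem_range.1 hl; omega))]
  simp_rw [sum_filter]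
  rw [sum_comm]
  refine sum_congr rfl fun j _ => ?_
  rw [← sum_filter, sum_const, nsmul_eq_mul, windowCount]

noncomputable def windowWeight (n γ k : ℕ) : ℝ :=
  windowCount n (γ + 1) ((γ + 1) / 2) k - windowCount n (γ - 1) ((γ + 1) / 2 - 1) k

theorem abs_circEigenvalue_of_two_mul_le {n γ k : ℕ} (hn : 0 < n) (hγ : 2 ≤ γ) (hk : 2 * k ≤ n) :
    |circEigenvalue n γ k| = (2 * windowWeight n γ k - 1) * circEigenvalue n γ k := by
  set M₁ := roundHalfDown ((γ + 1) * k) n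
  set M₂ := roundHalfDown ((γ - 1) * k) n
  have hM₁ : M₁ ≤ (γ + 1) / 2 := roundHalfDown_le hn <| by
    calc 2 * ((γ + 1) * k) = (γ + 1) * (2 * k) := by ring
      _ ≤ (2 * ((γ + 1) / 2) + 1) * n := Nat.mul_le_mul (by omega) hk
  have hM₂ : M₂ ≤ (γ + 1) / 2 - 1 := roundHalfDown_le hn <| by
    calc 2 * ((γ - 1) * k) = (γ - 1) * (2 * k) := by ring
      _ ≤ (2 * ((γ + 1) / 2 - 1) + 1) * n := Nat.mul_le_mul (by omega) hk
  have hM₂₁ : M₂ ≤ M₁ := roundHalfDown_mono n (Nat.mul_le_mul_right k (by omega))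
  have hM₁₂ : M₁ ≤ M₂ + 1 := by
    calc M₁ ≤ roundHalfDown ((γ - 1) * k + n) n := roundHalfDown_mono n <| by
          calc (γ + 1) * k = (γ - 1) * k + 2 * k := by
                rw [← add_mul]; congr 1; omega
            _ ≤ (γ - 1) * k + n := by omega
      _ = M₂ + 1 := roundHalfDown_add_self hn
  have hweight : windowWeight n γ k = 1 - ((M₁ : ℝ) - M₂) := by
    rw [windowWeight, windowCount_eq hn (by omega), windowCount_eq hn (by omega),
      Nat.cast_sub hM₁, Nat.cast_sub hM₂, Nat.cast_sub (by omega : 1 ≤ (γ + 1) / 2)]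
    ring
  have hsign : (-1) ^ (M₁ + M₂) = 2 * windowWeight n γ k - 1 := by
    rw [hweight]
    rcases (by omega : M₁ = M₂ ∨ M₁ = M₂ + 1) with h | h <;> rw [h]
    · rw [Even.neg_one_pow ⟨M₂, rfl⟩]
      ring
    · rw [Odd.neg_one_pow ⟨M₂, by ring⟩]
      push_cast
      ring
  have hnonneg : 0 ≤ (-1) ^ (M₁ + M₂) * circEigenvalue n γ k := by
    rw [circEigenvalue_eq_mul_cos (by omega), pow_add,
      show ∀ s t a b : ℝ, s * t * (4 * (a * b)) = 4 * ((s * a) * (t * b)) by intros; ring]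
    exact mul_nonneg (by norm_num) (mul_nonneg (neg_one_pow_roundHalfDown_mul_cos_nonneg hn)
      (neg_one_pow_roundHalfDown_mul_cos_nonneg hn))
  rw [← hsign, ← abs_of_nonneg hnonneg, abs_mul, abs_pow, abs_neg, abs_one, one_pow, one_mul]

theorem sum_DKern_sub_sum_DKern_eq_sum_windowWeight_mul_cos {n γ m : ℕ} (hm : 0 < m)
    (hmn : m < n) :
    (∑ l ∈ range ((γ + 1) / 2), DKern ((2 * l + 1) * n / (2 * (γ + 1))) (2 * π * m / n)) -
        ∑ l ∈ range ((γ + 1) / 2 - 1), DKern ((2 * l + 1) * n / (2 * (γ - 1))) (2 * π * m / n) =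
      ∑ j ∈ range n, windowWeight n γ (min j (n - j)) * cos (j * (2 * π * m / n)) := by
  rw [sum_DKern_eq_sum_windowCount_mul_cos hm hmn (by omega),
    sum_DKern_eq_sum_windowCount_mul_cos hm hmn (by omega), ← sum_sub_distrib]
  simp only [windowWeight, sub_mul]

theorem abs_circEigenvalue_eq_windowWeight_min {n γ j : ℕ} (hγ : 2 ≤ γ) (hj : j < n) :
    |circEigenvalue n γ j| =
      (2 * windowWeight n γ (min j (n - j)) - 1) * circEigenvalue n γ j := by
  have hmin : circEigenvalue n γ (min j (n - j)) = circEigenvalue n γ j := by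
    rcases le_total j (n - j) with h | h
    · rw [min_eq_left h]
    · rw [min_eq_right h, circEigenvalue_sub (by omega) hj.le]
  rw [← hmin]
  exact abs_circEigenvalue_of_two_mul_le (by omega) hγ (by omega)

theorem sum_abs_circEigenvalue {n γ : ℕ} [NeZero n] (hγ : 2 ≤ γ) (hn : 2 * (γ + 1) ≤ n) :
    ∑ j ∈ range n, |circEigenvalue n γ j| =
      4 * ∑ m ∈ ({1, γ} : Finset ℕ),
        ((∑ l ∈ range ((γ + 1) / 2), DKern ((2 * l + 1) * n / (2 * (γ + 1))) (2 * π * m / n)) -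
         (∑ l ∈ range ((γ + 1) / 2 - 1),
            DKern ((2 * l + 1) * n / (2 * (γ - 1))) (2 * π * m / n))) := by
  set w : ℕ → ℝ := fun j => windowWeight n γ (min j (n - j))
  rw [sum_congr rfl fun j hj => abs_circEigenvalue_eq_windowWeight_min hγ (mem_range.1 hj),
    sum_pair (by omega : 1 ≠ γ), sum_DKern_sub_sum_DKern_eq_sum_windowWeight_mul_cos one_pos
    (by omega), sum_DKern_sub_sum_DKern_eq_sum_windowWeight_mul_cos (by omega) (by omega)]
  calc ∑ j ∈ range n, (2 * w j - 1) * circEigenvalue n γ j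
      = 2 * ∑ j ∈ range n, w j * circEigenvalue n γ j - ∑ j ∈ range n, circEigenvalue n γ j := by
        simp only [sub_mul, one_mul, sum_sub_distrib, mul_sum, mul_assoc]
    _ = 4 * (∑ j ∈ range n, w j * cos (j * (2 * π * (1 : ℕ) / n)) +
        ∑ j ∈ range n, w j * cos (j * (2 * π * γ / n))) := by
        rw [sum_circEigenvalue_eq_zero hγ hn, sub_zero, ← sum_add_distrib, mul_sum, mul_sum]
        refine sum_congr rfl fun j _ => ?_
        rw [circEigenvalue]
        push_cast
        ring_nf

/-- `⌈γ/2⌉` is written `(γ + 1) / 2`, and the floors are natural-number divisions. -/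
theorem energy_circulant_general (n γ : ℕ) [NeZero n] (hγ : 3 ≤ γ)
    (hn : 2 * (γ + 1) ≤ n) :
    graphEnergy (circGraph n γ) =
      4 * ∑ m ∈ ({1, γ} : Finset ℕ),
        ((∑ l ∈ Finset.range ((γ + 1) / 2),
            DKern ((2 * l + 1) * n / (2 * (γ + 1))) (2 * π * m / n)) -
         (∑ l ∈ Finset.range ((γ + 1) / 2 - 1),
            DKern ((2 * l + 1) * n / (2 * (γ - 1))) (2 * π * m / n))) := by
  rw [graphEnergy_circGraph (by omega) hn, sum_abs_circEigenvalue (by omega) hn]
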